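/- arXiv:2103.01625 — 5 statements merged into one kernel-verified Lean document; each statement's English description precedes it below -/
import Mathlib

section
/- Let A be a commutative algebra over a field K with dim(A²) = 1. Then either (A²)² = 0, or A contains a unique nonzero idempotent. -/
/-- `A²`: the linear span of all products in `A`. -/
def Asq (K A : Type*) [Field K] [NonUnitalNonAssocRing A] [Module K A] : Submodule K A :=
  Submodule.span K {z : A | ∃ x y : A, z = x * y}

/-- `(A²)²`: the linear span of all products of elements of `A²`. -/
def Asqsq (K A : Type*) [Field K] [NonUnitalNonAssocRing A] [Module K A] : Submodule K A :=
  Submodule.span K {z : A | ∃ p ∈ Asq K A, ∃ q ∈ Asq K A, z = p * q}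

/-- Let `A` be a commutative algebra over a field `K` with `dim A² = 1`. Then either
`(A²)² = 0`, or `A` contains a unique nonzero idempotent. -/
theorem stmt1 {K A : Type*} [Field K] [NonUnitalNonAssocRing A] [Module K A]
    [SMulCommClass K A A] [IsScalarTower K A A]
    (hcomm : ∀ x y : A, x * y = y * x)
    (hdim : Module.rank K (Asq K A) = 1) :
    Asqsq K A = ⊥ ∨ ∃! e : A, e ≠ 0 ∧ e * e = e := by
  obtain ⟨u₀, hu₀, hspan⟩ := rank_eq_one_iff.mp hdim
  set u : A := (u₀ : A) with hu_def
  have hu_ne : u ≠ 0 := fun h => hu₀ (Subtype.ext h)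
  have hu_mem : u ∈ Asq K A := u₀.2
  have hrep : ∀ v ∈ Asq K A, ∃ r : K, r • u = v := by
    intro v hv
    obtain ⟨r, hr⟩ := hspan ⟨v, hv⟩
    exact ⟨r, congrArg Subtype.val hr⟩
  -- u * u = λ • u for some λ
  have huu_mem : u * u ∈ Asq K A := Submodule.subset_span ⟨u, u, rfl⟩
  obtain ⟨l, hl⟩ := hrep (u * u) huu_mem
  by_cases hl0 : l = 0
  · -- (A²)² = 0
    left
    rw [Asqsq, Submodule.span_eq_bot]
    rintro z ⟨p, hp, q, hq, rfl⟩
    obtain ⟨a, ha⟩ := hrep p hp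
    obtain ⟨b, hb⟩ := hrep q hq
    rw [← ha, ← hb, smul_mul_assoc, mul_smul_comm, ← hl, hl0, zero_smul,
      smul_zero, smul_zero]
  · right
    refine ⟨l⁻¹ • u, ⟨?_, ?_⟩, ?_⟩
    · exact smul_ne_zero (inv_ne_zero hl0) hu_ne
    · rw [smul_mul_assoc, mul_smul_comm, ← hl, smul_smul, smul_smul,
        mul_assoc, inv_mul_cancel₀ hl0, mul_one]
    · rintro f ⟨hf_ne, hf_idem⟩
      have hf_mem : f ∈ Asq K A := by
        rw [← hf_idem]; exact Submodule.subset_span ⟨f, f, rfl⟩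
      obtain ⟨c, hc⟩ := hrep f hf_mem
      have hc0 : c ≠ 0 := by rintro rfl; rw [zero_smul] at hc; exact hf_ne hc.symm
      have key : (c * c * l) • u = c • u := by
        have h2 : (c • u) * (c • u) = c • u := by rw [hc, hf_idem]
        rw [smul_mul_assoc, mul_smul_comm, ← hl, smul_smul, smul_smul] at h2
        exact h2
      have hccl : c * c * l = c := by
        by_contra h
        have := sub_smul (c * c * l) c u ▸ sub_eq_zero_of_eq key
        exact hu_ne ((smul_eq_zero.mp this).resolve_left (sub_ne_zero_of_ne h))
      have h1 : c * l = 1 := mul_left_cancel₀ hc0 (by rw [← mul_assoc, hccl, mul_one])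
      have hcl : c = l⁻¹ := by field_simp; linear_combination h1
      rw [← hc, hcl]
end

section
/- Let (V, ⟨·,·⟩) be an inner product space over K with orthogonal basis and a vector v with ⟨v,v⟩ = 1. Define a product on V by xy = ⟨x,y⟩v. Then V becomes an evolution algebra with dim(V²) = 1, (V²)² ≠ 0, v is its unique nonzero idempotent, and ⟨·,·⟩ is recovered as the unique bilinear form giving the product relative to v. -/
/-- Let `(V, B)` be an inner product space with an orthogonal basis `b` and a vector `v`
with `B v v = 1`. Endow `V` with the product `x * y := B x y • v`. Then `V` becomes an
evolution algebra (the orthogonal basis is a natural basis), `dim V² = 1`, `(V²)² ≠ 0`,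
`v` is its unique nonzero idempotent, and `B` is the unique bilinear form giving the
product relative to `v`. -/
theorem stmt7 {K V : Type*} {ι : Type*} [Field K] [AddCommGroup V] [Module K V]
    (B : V →ₗ[K] V →ₗ[K] K) (hsymm : ∀ x y : V, B x y = B y x)
    (b : Module.Basis ι K V) (hb : ∀ i j, i ≠ j → B (b i) (b j) = 0)
    (v : V) (hv : B v v = 1) :
    (∀ i j, i ≠ j → B (b i) (b j) • v = (0 : V)) ∧
    Module.rank K (Submodule.span K {z : V | ∃ x y : V, z = B x y • v}) = 1 ∧
    Submodule.span K {z : V |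
        ∃ p ∈ Submodule.span K {z' : V | ∃ x y : V, z' = B x y • v},
        ∃ q ∈ Submodule.span K {z' : V | ∃ x y : V, z' = B x y • v}, z = B p q • v} ≠ ⊥ ∧
    (B v v • v = v ∧ ∀ e : V, e ≠ 0 → B e e • v = e → e = v) ∧
    (∀ B' : V →ₗ[K] V →ₗ[K] K, (∀ x y : V, B' x y • v = B x y • v) → B' = B) := by
  have hv0 : v ≠ 0 := by
    intro h
    rw [h] at hv
    simp at hv
  have hvmem : v ∈ {z : V | ∃ x y : V, z = B x y • v} := ⟨v, v, by rw [hv, one_smul]⟩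
  have hspan : Submodule.span K {z : V | ∃ x y : V, z = B x y • v} =
      Submodule.span K ({v} : Set V) := by
    apply le_antisymm
    · rw [Submodule.span_le]
      rintro z ⟨x, y, rfl⟩
      exact Submodule.smul_mem _ _ (Submodule.subset_span rfl)
    · exact Submodule.span_mono (Set.singleton_subset_iff.mpr hvmem)
  refine ⟨fun i j hij => by rw [hb i j hij, zero_smul], ?_, ?_, ⟨by rw [hv, one_smul], ?_⟩, ?_⟩
  · rw [hspan, rank_span_set ((linearIndepOn_singleton_iff K).mpr hv0), Cardinal.mk_singleton]
  · intro h
    have hvmem' : v ∈ Submodule.span K {z : V |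
        ∃ p ∈ Submodule.span K {z' : V | ∃ x y : V, z' = B x y • v},
        ∃ q ∈ Submodule.span K {z' : V | ∃ x y : V, z' = B x y • v}, z = B p q • v} :=
      Submodule.subset_span ⟨v, Submodule.subset_span hvmem, v, Submodule.subset_span hvmem,
        by rw [hv, one_smul]⟩
    rw [h, Submodule.mem_bot] at hvmem'
    exact hv0 hvmem'
  · intro e he0 he
    obtain ⟨c, rfl⟩ : ∃ c : K, e = c • v := ⟨B e e, he.symm⟩
    have hc0 : c ≠ 0 := fun h => he0 (by rw [h, zero_smul])
    have hBe : B (c • v) (c • v) = c * c := by simp [hv]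
    rw [hBe] at he
    have h2 : (c * c - c) • v = 0 := by rw [sub_smul, he, sub_self]
    rcases smul_eq_zero.mp h2 with h | h
    · have : c * (c - 1) = 0 := by ring_nf; linear_combination h
      rcases mul_eq_zero.mp this with h' | h'
      · exact absurd h' hc0
      · rw [sub_eq_zero.mp h', one_smul]
    · exact absurd h hv0
  · intro B' hB'
    ext x y
    have h2 : (B' x y - B x y) • v = 0 := by rw [sub_smul, hB' x y, sub_self]
    rcases smul_eq_zero.mp h2 with h | h
    · exact sub_eq_zero.mp h
    · exact absurd h hv0
end

section
/- Let K be a field of characteristic not two, and let A, B be evolution K-algebras with dim(A²) = dim(B²) = 1 and (A²)² ≠ 0, (B²)² ≠ 0, with canonical inner products ⟨·,·⟩_A, ⟨·,·⟩_B. Then A and B are isomorphic as algebras if and only if (A, ⟨·,·⟩_A) and (B, ⟨·,·⟩_B) are isometric inner product spaces. -/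
section Aux
variable {K V : Type*} [Field K] [AddCommGroup V] [Module K V]

lemma exists_reflection (F : V →ₗ[K] V →ₗ[K] K) (hsymm : ∀ x y, F x y = F y x)
    (w : V) (hw : F w w ≠ 0) :
    ∃ τ : V ≃ₗ[K] V, (∀ x, τ x = x - ((F w w)⁻¹ * (2 * F w x)) • w) ∧
      ∀ x y, F (τ x) (τ y) = F x y := by
  set t := F w w with ht
  set T : V →ₗ[K] V := LinearMap.id - (t⁻¹ * 2) • (F w).smulRight w with hTdef
  have hT : ∀ x, T x = x - (t⁻¹ * (2 * F w x)) • w := by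
    intro x
    simp [hTdef, LinearMap.smulRight_apply, smul_smul, mul_assoc]
  have hinv : ∀ x, T (T x) = x := by
    intro x
    rw [hT, hT, map_sub, map_smul, smul_eq_mul, ← ht]
    have hc : t⁻¹ * (2 * (F w x - t⁻¹ * (2 * F w x) * t)) = -(t⁻¹ * (2 * F w x)) := by
      field_simp
      ring
    rw [hc, neg_smul, sub_neg_eq_add, sub_add_cancel]
  have hiso : ∀ x y, F (T x) (T y) = F x y := by
    intro x y
    rw [hT, hT]
    simp only [map_sub, map_smul, LinearMap.sub_apply, LinearMap.smul_apply, smul_eq_mul]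
    rw [hsymm x w, ← ht]
    field_simp
    ring
  refine ⟨LinearEquiv.ofLinear T T (LinearMap.ext hinv) (LinearMap.ext hinv), ?_, ?_⟩
  · intro x
    simpa [mul_assoc] using hT x
  · intro x y
    simpa using hiso x y

lemma exists_isometry_map (F : V →ₗ[K] V →ₗ[K] K) (hsymm : ∀ x y, F x y = F y x)
    (h2 : (2:K) ≠ 0) (u v : V) (huv : F u u = F v v) (hu : F u u ≠ 0) :
    ∃ h : V ≃ₗ[K] V, (∀ x y, F (h x) (h y) = F x y) ∧ h u = v := by
  have hsub : F (u - v) (u - v) = 2 * (F u u - F u v) := by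
    simp only [map_sub, LinearMap.sub_apply]
    rw [hsymm v u, ← huv]; ring
  by_cases hw : F (u - v) (u - v) = 0
  · -- use w = u + v
    have hvu : F u v = F u u := by
      rw [hsub] at hw
      have := mul_eq_zero.mp hw
      rcases this with h | h
      · exact absurd h h2
      · exact (sub_eq_zero.mp h).symm
    have hadd : F (u + v) (u + v) = 2 * 2 * F u u := by
      simp only [map_add, LinearMap.add_apply]
      rw [hsymm v u, ← huv, hvu]; ring
    have hwne : F (u + v) (u + v) ≠ 0 := by
      rw [hadd]
      exact mul_ne_zero (mul_ne_zero h2 h2) hu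
    obtain ⟨τ, hτ, hiso⟩ := exists_reflection F hsymm (u + v) hwne
    refine ⟨τ.trans (LinearEquiv.neg K), ?_, ?_⟩
    · intro x y
      simp [hiso]
    · have hcoef : (F (u + v) (u + v))⁻¹ * (2 * F (u + v) u) = 1 := by
        have h1 : F (u + v) u = 2 * F u u := by
          simp only [map_add, LinearMap.add_apply]
          rw [hsymm v u, hvu]; ring
        rw [hadd, h1]
        field_simp
      have : τ u = -v := by
        rw [hτ, hcoef, one_smul]
        abel
      simp [this]
  · obtain ⟨τ, hτ, hiso⟩ := exists_reflection F hsymm (u - v) hw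
    refine ⟨τ, hiso, ?_⟩
    have hcoef : (F (u - v) (u - v))⁻¹ * (2 * F (u - v) u) = 1 := by
      have h1 : F (u - v) u = F u u - F u v := by
        simp only [map_sub, LinearMap.sub_apply]
        rw [hsymm v u]
      rw [hsub, h1]
      rw [hsub] at hw
      field_simp
      exact div_self (fun h => hw (by rw [h, mul_zero]))
    rw [hτ, hcoef, one_smul]
    abel

end Aux


/-- Let `K` be a field of characteristic not two, and `A`, `B` evolution `K`-algebras with
`dim A² = dim B² = 1`, `(A²)² ≠ 0`, `(B²)² ≠ 0`, with canonical inner products `FA`, `FB`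
(and unique nonzero idempotents `eA`, `eB`). Then `A ≅ B` as algebras if and only if
`(A, FA)` and `(B, FB)` are isometric. -/
theorem stmt8 {K A B : Type*} {ι κ : Type*} [Field K]
    [NonUnitalNonAssocRing A] [Module K A] [SMulCommClass K A A] [IsScalarTower K A A]
    [NonUnitalNonAssocRing B] [Module K B] [SMulCommClass K B B] [IsScalarTower K B B]
    (h2 : (2 : K) ≠ 0)
    (hcommA : ∀ x y : A, x * y = y * x) (hcommB : ∀ x y : B, x * y = y * x)
    (bA : Module.Basis ι K A) (hbA : ∀ i j, i ≠ j → bA i * bA j = 0)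
    (bB : Module.Basis κ K B) (hbB : ∀ i j, i ≠ j → bB i * bB j = 0)
    (hdimA : Module.rank K (Asq K A) = 1) (hdimB : Module.rank K (Asq K B) = 1)
    (hneA : Asqsq K A ≠ ⊥) (hneB : Asqsq K B ≠ ⊥)
    (eA : A) (heA : eA ≠ 0 ∧ eA * eA = eA)
    (eB : B) (heB : eB ≠ 0 ∧ eB * eB = eB)
    (FA : A →ₗ[K] A →ₗ[K] K) (hFAsymm : ∀ x y : A, FA x y = FA y x)
    (hFA : ∀ x y : A, x * y = FA x y • eA)
    (FB : B →ₗ[K] B →ₗ[K] K) (hFBsymm : ∀ x y : B, FB x y = FB y x)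
    (hFB : ∀ x y : B, x * y = FB x y • eB) :
    (∃ f : A ≃ₗ[K] B, ∀ x y : A, f (x * y) = f x * f y) ↔
      (∃ g : A ≃ₗ[K] B, ∀ x y : A, FB (g x) (g y) = FA x y) := by
  have cancelA : ∀ c d : K, c • eA = d • eA → c = d := by
    intro c d h
    have h' : (c - d) • eA = 0 := by rw [sub_smul, h, sub_self]
    rcases smul_eq_zero.mp h' with h'' | h''
    · exact sub_eq_zero.mp h''
    · exact absurd h'' heA.1
  have cancelB : ∀ c d : K, c • eB = d • eB → c = d := by
    intro c d h
    have h' : (c - d) • eB = 0 := by rw [sub_smul, h, sub_self]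
    rcases smul_eq_zero.mp h' with h'' | h''
    · exact sub_eq_zero.mp h''
    · exact absurd h'' heB.1
  have hFAee : FA eA eA = 1 := by
    apply cancelA
    rw [← hFA, heA.2, one_smul]
  have hFBee : FB eB eB = 1 := by
    apply cancelB
    rw [← hFB, heB.2, one_smul]
  constructor
  · rintro ⟨f, hf⟩
    -- f eA is a nonzero idempotent of B, hence equals eB
    have hfe : f eA = eB := by
      have h1 : f eA * f eA = f eA := by rw [← hf, heA.2]
      set c := FB (f eA) (f eA) with hc
      have hce : c • eB = f eA := by rw [← hFB, h1]
      have hne : f eA ≠ 0 := by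
        simp [LinearEquiv.map_eq_zero_iff, heA.1]
      have hcne : c ≠ 0 := by
        intro h0
        rw [h0, zero_smul] at hce
        exact hne hce.symm
      have hcc : c * c = c := by
        have h3 : FB (c • eB) (c • eB) = c * c := by
          simp only [map_smul, LinearMap.smul_apply, smul_eq_mul, hFBee]
          ring
        calc c * c = FB (c • eB) (c • eB) := h3.symm
          _ = FB (f eA) (f eA) := by rw [hce]
          _ = c := rfl
      have hc1 : c = 1 := by
        have := mul_right_cancel₀ hcne (hcc.trans (one_mul c).symm)
        exact this
      rw [← hce, hc1, one_smul]
    refine ⟨f, fun x y => ?_⟩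
    apply cancelB
    rw [← hFB, ← hf, hFA, map_smul, hfe]
  · rintro ⟨g, hg⟩
    have hFBuu : FB (g eA) (g eA) = 1 := by rw [hg, hFAee]
    obtain ⟨h, hiso, hmap⟩ := exists_isometry_map FB hFBsymm h2 (g eA) eB
      (by rw [hFBuu, hFBee]) (by rw [hFBuu]; exact one_ne_zero)
    refine ⟨g.trans h, fun x y => ?_⟩
    have hfe : (g.trans h) eA = eB := by simpa using hmap
    have hfiso : ∀ x y : A, FB ((g.trans h) x) ((g.trans h) y) = FA x y := by
      intro x y
      simp only [LinearEquiv.trans_apply]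
      rw [hiso, hg]
    rw [hFA, map_smul, hfe, hFB ((g.trans h) x), hfiso]
end

section
/- Let K be a quadratically closed field and A, B evolution K-algebras, both finite-dimensional, with dim(A²) = dim(B²) = 1 and (A²)² = A³ = 0, (B²)² = B³ = 0. Then A ≅ B if and only if dim(A) = dim(B) and dim(Ann(A)) = dim(Ann(B)). -/
/-- `A³`: the linear span of products of elements of `A²` with elements of `A`. -/
def Acube (K A : Type*) [Field K] [NonUnitalNonAssocRing A] [Module K A] : Submodule K A :=
  Submodule.span K {z : A | ∃ p ∈ Asq K A, ∃ y : A, z = p * y}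

/-- The annihilator `Ann(A) = {x | xA = 0}` of a commutative nonassociative algebra,
as a submodule. -/
def annihilator (K : Type*) (A : Type*) [Field K] [NonUnitalNonAssocRing A] [Module K A]
    [IsScalarTower K A A] : Submodule K A where
  carrier := {x : A | ∀ y : A, x * y = 0}
  add_mem' := by
    intro x y hx hy z
    rw [add_mul, hx z, hy z, add_zero]
  zero_mem' := by
    intro y
    rw [zero_mul]
  smul_mem' := by
    intro c x hx y
    rw [smul_mul_assoc, hx y, smul_zero]

theorem evol_structure {K A : Type*} {ι : Type*} [Field K]
    [NonUnitalNonAssocRing A] [Module K A] [SMulCommClass K A A] [IsScalarTower K A A]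
    [FiniteDimensional K A]
    (hqc : ∀ k : K, ∃ l : K, l * l = k)
    (hcomm : ∀ x y : A, x * y = y * x)
    (bA : Module.Basis ι K A) (hbA : ∀ i j, i ≠ j → bA i * bA j = 0)
    (hdimA : Module.rank K (Asq K A) = 1)
    (hA3 : Acube K A = ⊥) :
    ∃ (s m : ℕ) (hm : 0 < m) (b : Module.Basis (Fin s ⊕ Fin m) K A),
      s + m = Module.finrank K A ∧ m = Module.finrank K (annihilator K A) ∧
      ∀ i j, b i * b j = (if i = j ∧ i.isLeft then b (Sum.inr ⟨0, hm⟩) else 0) := by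
  classical
  haveI : Fintype ι := FiniteDimensional.fintypeBasisIndex bA
  -- products of A² with anything vanish
  have hmul0 : ∀ p ∈ Asq K A, ∀ y : A, p * y = 0 := by
    intro p hp y
    have h : p * y ∈ Acube K A := Submodule.subset_span ⟨p, hp, y, rfl⟩
    rwa [hA3, Submodule.mem_bot] at h
  -- generator c of A²
  have h1 : Module.finrank K (Asq K A) = 1 := by
    simp [Module.finrank, hdimA]
  obtain ⟨v, hv0, hvspan⟩ := finrank_eq_one_iff'.mp h1
  set c : A := (v : A) with hc_def
  have hcAsq : c ∈ Asq K A := v.2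
  have hc0 : c ≠ 0 := fun h => hv0 (Subtype.ext h)
  have hcmem : ∀ p ∈ Asq K A, ∃ k : K, p = k • c := by
    intro p hp
    obtain ⟨k, hk⟩ := hvspan ⟨p, hp⟩
    exact ⟨k, by have := congrArg Subtype.val hk; simp at this; exact this.symm⟩
  have hcAnn : c ∈ annihilator K A := fun y => hmul0 c hcAsq y
  -- diagonal values
  have hsq : ∀ i, bA i * bA i ∈ Asq K A := fun i => Submodule.subset_span ⟨bA i, bA i, rfl⟩
  choose w hw using fun i => hcmem _ (hsq i)
  -- key computation x * bA j
  have hxe : ∀ (x : A) (j : ι), x * bA j = (bA.repr x j * w j) • c := by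
    intro x j
    calc x * bA j = (∑ i, bA.repr x i • bA i) * bA j := by rw [bA.sum_repr x]
      _ = ∑ i, (bA.repr x i • bA i) * bA j := by rw [Finset.sum_mul]
      _ = ∑ i, bA.repr x i • (bA i * bA j) := by simp only [smul_mul_assoc]
      _ = bA.repr x j • (bA j * bA j) := by
          refine Finset.sum_eq_single j (fun i _ hij => ?_) (by simp)
          rw [hbA i j hij, smul_zero]
      _ = (bA.repr x j * w j) • c := by rw [hw j, smul_smul]
  -- annihilator characterization
  have hann : ∀ x : A, x ∈ annihilator K A ↔ ∀ i, w i ≠ 0 → bA.repr x i = 0 := by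
    intro x
    constructor
    · intro hx i hwi
      have h := hx (bA i)
      rw [hxe x i] at h
      rcases smul_eq_zero.mp h with h' | h'
      · exact (mul_eq_zero.mp h').resolve_right hwi
      · exact absurd h' hc0
    · intro hx y
      have : x * y = y * x := hcomm x y
      rw [this]
      calc y * x = (∑ i, bA.repr y i • bA i) * x := by rw [bA.sum_repr y]
        _ = ∑ i, bA.repr y i • (bA i * x) := by
            rw [Finset.sum_mul]; simp only [smul_mul_assoc]
        _ = 0 := by
            refine Finset.sum_eq_zero fun i _ => ?_
            rw [hcomm (bA i) x, hxe x i]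
            by_cases hwi : w i = 0
            · simp [hwi]
            · simp [hx i hwi]
  -- support set and normalization
  set S : Finset ι := Finset.univ.filter (fun i => w i ≠ 0) with hS_def
  choose l hl using fun i => hqc (w i)
  have hlne : ∀ i ∈ S, l i ≠ 0 := by
    intro i hi h0
    have hw0 : w i = 0 := by rw [← hl i, h0, zero_mul]
    simp [hS_def] at hi
    exact hi hw0
  set s : ℕ := S.card with hs_def
  set es : Fin s → ι := fun i => ((S.equivFin.symm i : ι)) with hes_def
  have hes_mem : ∀ i, es i ∈ S := fun i => (S.equivFin.symm i).2
  have hes_inj : Function.Injective es :=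
    Subtype.val_injective.comp S.equivFin.symm.injective
  set u : Fin s → A := fun i => (l (es i))⁻¹ • bA (es i) with hu_def
  -- basis of the annihilator with c first
  have hcAnn' : (⟨c, hcAnn⟩ : annihilator K A) ≠ 0 := fun h => hc0 (congrArg Subtype.val h)
  have hli : LinearIndepOn K id
      ({(⟨c, hcAnn⟩ : annihilator K A)} : Set (annihilator K A)) :=
    LinearIndepOn.singleton hcAnn'
  haveI : Fintype (hli.extend (Set.subset_univ _)) :=
    FiniteDimensional.fintypeBasisIndex (Module.Basis.extend hli)
  set m : ℕ := Fintype.card (hli.extend (Set.subset_univ _)) with hm_def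
  have hm_eq : m = Module.finrank K (annihilator K A) :=
    (Module.finrank_eq_card_basis (Module.Basis.extend hli)).symm
  have hcX : (⟨c, hcAnn⟩ : annihilator K A) ∈ hli.extend (Set.subset_univ _) :=
    hli.subset_extend _ rfl
  have hm : 0 < m := Fintype.card_pos_iff.mpr ⟨⟨_, hcX⟩⟩
  set eX : (hli.extend (Set.subset_univ _)) ≃ Fin m := Fintype.equivFin _ with heX_def
  set e := eX.trans (Equiv.swap (eX ⟨_, hcX⟩) ⟨0, hm⟩) with he_def
  set bAnn : Module.Basis (Fin m) K (annihilator K A) := (Module.Basis.extend hli).reindex e with hbAnn_def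
  have hbAnn0 : (bAnn ⟨0, hm⟩ : annihilator K A) = ⟨c, hcAnn⟩ := by
    rw [hbAnn_def, Module.Basis.reindex_apply]
    have he0 : e.symm ⟨0, hm⟩ = ⟨_, hcX⟩ := by
      rw [he_def]
      simp [Equiv.symm_trans_apply, Equiv.symm_swap, Equiv.swap_apply_right]
    rw [he0, Module.Basis.extend_apply_self]
  set v : Fin m → A := fun j => ((bAnn j : annihilator K A) : A) with hv_def
  have hvAnn : ∀ j, v j ∈ annihilator K A := fun j => (bAnn j).2
  have hv0' : v ⟨0, hm⟩ = c := by rw [hv_def]; simp only []; rw [hbAnn0]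
  -- linear independence
  have hu_li : LinearIndependent K u := by
    have h1 : LinearIndependent K (bA ∘ es) := bA.linearIndependent.comp es hes_inj
    have h2 := h1.units_smul (fun i => Units.mk0 (l (es i))⁻¹
      (inv_ne_zero (hlne _ (hes_mem i))))
    exact h2
  have hv_li : LinearIndependent K v := by
    have h := bAnn.linearIndependent.map' (annihilator K A).subtype
      (Submodule.ker_subtype _)
    exact h
  have hu_span : Submodule.span K (Set.range u) ≤
      Submodule.span K (bA '' {i | w i ≠ 0}) := by
    rw [Submodule.span_le]
    rintro _ ⟨i, rfl⟩
    refine Submodule.smul_mem _ _ (Submodule.subset_span ⟨es i, ?_, rfl⟩)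
    have h := hes_mem i
    simp [hS_def] at h
    exact h
  have hannspan : annihilator K A ≤ Submodule.span K (bA '' {i | w i = 0}) := by
    intro x hx
    rw [Module.Basis.mem_span_image]
    intro i hi
    simp only [Finset.mem_coe, Finsupp.mem_support_iff] at hi
    by_contra hwi
    exact hi ((hann x).mp hx i hwi)
  have hv_span : Submodule.span K (Set.range v) ≤
      Submodule.span K (bA '' {i | w i = 0}) := by
    refine le_trans ?_ hannspan
    rw [Submodule.span_le]
    rintro _ ⟨j, rfl⟩
    exact hvAnn j
  have hdisj : Disjoint (Submodule.span K (Set.range u)) (Submodule.span K (Set.range v)) := by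
    refine Disjoint.mono hu_span hv_span ?_
    refine bA.linearIndependent.disjoint_span_image ?_
    rw [Set.disjoint_left]
    intro i hi1 hi2
    exact hi1 hi2
  have hg_li : LinearIndependent K (Sum.elim u v) := hu_li.sum_type hv_li hdisj
  -- spanning
  have hv_eq_ann : Submodule.span K (Set.range v) = annihilator K A := by
    have h1 : Set.range v = (annihilator K A).subtype '' Set.range bAnn := by
      rw [← Set.range_comp]; rfl
    rw [h1, Submodule.span_image, bAnn.span_eq, Submodule.map_subtype_top]
  have hx_span : ∀ i : ι, bA i ∈ Submodule.span K (Set.range (Sum.elim u v)) := by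
    intro i
    by_cases hwi : w i = 0
    · have hmem : bA i ∈ annihilator K A := by
        rw [hann]
        intro k hk
        rw [bA.repr_self, Finsupp.single_apply]
        by_cases hik : i = k
        · exact absurd (hik ▸ hwi) hk
        · simp [hik]
      rw [← hv_eq_ann] at hmem
      refine Submodule.span_mono ?_ hmem
      rintro _ ⟨j, rfl⟩
      exact ⟨Sum.inr j, rfl⟩
    · have hiS : i ∈ S := by simp [hS_def, hwi]
      set j : Fin s := S.equivFin ⟨i, hiS⟩ with hj_def
      have hesj : es j = i := by
        rw [hes_def, hj_def]; simp
      have hbi : bA i = l i • u j := by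
        rw [hu_def]
        simp only [hesj]
        rw [smul_smul, mul_inv_cancel₀ (hlne i hiS), one_smul]
      rw [hbi]
      exact Submodule.smul_mem _ _ (Submodule.subset_span ⟨Sum.inl j, rfl⟩)
  have hg_span : ⊤ ≤ Submodule.span K (Set.range (Sum.elim u v)) := by
    rw [← bA.span_eq, Submodule.span_le]
    rintro _ ⟨i, rfl⟩
    exact hx_span i
  set b : Module.Basis (Fin s ⊕ Fin m) K A := Module.Basis.mk hg_li hg_span with hb_def
  have hb_apply : ∀ i, b i = Sum.elim u v i := fun i => Module.Basis.mk_apply _ _ _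
  refine ⟨s, m, hm, b, ?_, hm_eq, ?_⟩
  · rw [Module.finrank_eq_card_basis b, Fintype.card_sum, Fintype.card_fin, Fintype.card_fin]
  · intro i j
    rcases i with i | i
    · rcases j with j | j
      · -- inl inl
        rw [hb_apply, hb_apply, hb_apply]
        simp only [Sum.elim_inl, Sum.elim_inr]
        by_cases hij : i = j
        · subst hij
          rw [hu_def]
          simp only []
          rw [smul_mul_assoc, mul_smul_comm, smul_smul, hw (es i), smul_smul]
          have hwne : w (es i) ≠ 0 := by
            have h := hes_mem i
            simp [hS_def] at h
            exact h
          have hlne' : l (es i) ≠ 0 := hlne _ (hes_mem i)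
          rw [show (l (es i))⁻¹ * (l (es i))⁻¹ * w (es i) = 1 by
            rw [← hl (es i)]; field_simp]
          rw [one_smul, if_pos (by simp), hv0']
        · have hne : es i ≠ es j := fun h => hij (hes_inj h)
          rw [hu_def]
          simp only []
          rw [smul_mul_assoc, mul_smul_comm, hbA _ _ hne, smul_zero, smul_zero]
          rw [if_neg]
          simp [hij]
      · -- inl inr
        rw [hb_apply (Sum.inl i), hb_apply (Sum.inr j)]
        simp only [Sum.elim_inl, Sum.elim_inr]
        rw [hcomm, hvAnn j _]
        rw [if_neg]
        simp
    · rw [hb_apply (Sum.inr i)]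
      simp only [Sum.elim_inr]
      rw [hvAnn i _, if_neg]
      rcases j with j | j <;> simp

theorem mul_of_basis {K A B : Type*} {ι : Type*} [Field K]
    [NonUnitalNonAssocRing A] [Module K A] [SMulCommClass K A A] [IsScalarTower K A A]
    [NonUnitalNonAssocRing B] [Module K B] [SMulCommClass K B B] [IsScalarTower K B B]
    (b : Module.Basis ι K A) (f : A ≃ₗ[K] B)
    (h : ∀ i j, f (b i * b j) = f (b i) * f (b j)) :
    ∀ x y : A, f (x * y) = f x * f y := by
  have key : (LinearMap.mul K A).compr₂ (f : A →ₗ[K] B) =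
      (LinearMap.mul K B).compl₁₂ (f : A →ₗ[K] B) (f : A →ₗ[K] B) := by
    apply b.ext
    intro i
    apply b.ext
    intro j
    simpa using h i j
  intro x y
  have h2 := LinearMap.congr_fun (LinearMap.congr_fun key x) y
  simpa using h2

/-- Let `K` be a quadratically closed field and `A`, `B` finite-dimensional evolution
`K`-algebras with `dim A² = dim B² = 1` and `(A²)² = A³ = 0`, `(B²)² = B³ = 0`. Then
`A ≅ B` if and only if `dim A = dim B` and `dim Ann(A) = dim Ann(B)`. -/
theorem stmt14 {K A B : Type*} {ι κ : Type*} [Field K]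
    [NonUnitalNonAssocRing A] [Module K A] [SMulCommClass K A A] [IsScalarTower K A A]
    [NonUnitalNonAssocRing B] [Module K B] [SMulCommClass K B B] [IsScalarTower K B B]
    [FiniteDimensional K A] [FiniteDimensional K B]
    (hqc : ∀ k : K, ∃ l : K, l * l = k)
    (hcommA : ∀ x y : A, x * y = y * x) (hcommB : ∀ x y : B, x * y = y * x)
    (bA : Module.Basis ι K A) (hbA : ∀ i j, i ≠ j → bA i * bA j = 0)
    (bB : Module.Basis κ K B) (hbB : ∀ i j, i ≠ j → bB i * bB j = 0)
    (hdimA : Module.rank K (Asq K A) = 1) (hdimB : Module.rank K (Asq K B) = 1)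
    (hA22 : Asqsq K A = ⊥) (hB22 : Asqsq K B = ⊥)
    (hA3 : Acube K A = ⊥) (hB3 : Acube K B = ⊥) :
    (∃ f : A ≃ₗ[K] B, ∀ x y : A, f (x * y) = f x * f y) ↔
      (Module.finrank K A = Module.finrank K B ∧
        Module.finrank K (annihilator K A) = Module.finrank K (annihilator K B)) := by
  constructor
  · rintro ⟨f, hf⟩
    refine ⟨f.finrank_eq, ?_⟩
    have hmap : Submodule.map (f : A →ₗ[K] B) (annihilator K A) = annihilator K B := by
      apply le_antisymm
      · rintro _ ⟨x, hx, rfl⟩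
        intro y
        show f x * y = 0
        have : f x * f (f.symm y) = f (x * f.symm y) := (hf x (f.symm y)).symm
        rw [f.apply_symm_apply] at this
        rw [this, hx (f.symm y), map_zero]
      · intro y hy
        refine ⟨f.symm y, ?_, f.apply_symm_apply y⟩
        intro z
        apply f.injective
        rw [map_zero, hf, f.apply_symm_apply]
        exact hy (f z)
    rw [← hmap, LinearEquiv.finrank_map_eq]
  · rintro ⟨hr, ha⟩
    obtain ⟨s, m, hm, b, hsm, hmann, hprod⟩ :=
      evol_structure hqc hcommA bA hbA hdimA hA3
    obtain ⟨s', m', hm', b', hsm', hmann', hprod'⟩ :=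
      evol_structure hqc hcommB bB hbB hdimB hB3
    have hmm : m = m' := by rw [hmann, hmann', ha]
    subst hmm
    have hss : s = s' := by
      have := hsm.trans (hr.trans hsm'.symm)
      omega
    subst hss
    refine ⟨b.equiv b' (Equiv.refl _), ?_⟩
    apply mul_of_basis b
    have hfb : ∀ i, (b.equiv b' (Equiv.refl _)) (b i) = b' i := fun i => by
      rw [Module.Basis.equiv_apply]; rfl
    intro i j
    rw [hfb i, hfb j, hprod, hprod']
    by_cases hc : i = j ∧ i.isLeft
    · rw [if_pos hc, if_pos hc, hfb]
    · rw [if_neg hc, if_neg hc, map_zero]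
end

section
/- Let (W₁, q₁) and (W₂, q₂) be finite-dimensional nondegenerate isometric quadratic spaces over a field K of characteristic not two, and let w₁ ∈ W₁, w₂ ∈ W₂ be nonzero isotropic vectors. Then there exists an isometry f : W₁ → W₂ with f(w₁) = w₂. -/
open QuadraticMap

section Refl

variable {K W : Type*} [Field K] [AddCommGroup W] [Module K W]
variable (q : QuadraticForm K W)

/-- The reflection in a vector `u` with `q u ≠ 0`, as a linear map. -/
noncomputable def reflLM (u : W) : W →ₗ[K] W where
  toFun x := x - (polar q x u / q u) • u
  map_add' x y := by
    simp only [polar_add_left, add_div, add_smul]; abel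
  map_smul' a x := by
    simp only [polar_smul_left, smul_eq_mul, RingHom.id_apply, smul_sub, mul_div_assoc, mul_smul]

lemma reflLM_apply (u x : W) :
    reflLM q u x = x - (polar q x u / q u) • u := rfl

lemma qmap_add (x y : W) : q (x + y) = q x + q y + polar q x y := by
  rw [polar]; ring

lemma reflLM_isometry (u : W) (hu : q u ≠ 0) (x : W) :
    q (reflLM q u x) = q x := by
  rw [reflLM_apply, sub_eq_add_neg, ← neg_smul, qmap_add,
    QuadraticMap.map_smul, polar_smul_right]
  simp only [smul_eq_mul]
  field_simp
  ring

lemma reflLM_involutive (u : W) (hu : q u ≠ 0) (x : W) :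
    reflLM q u (reflLM q u x) = x := by
  simp only [reflLM_apply, polar_sub_left, polar_smul_left, polar_self, smul_eq_mul]
  have h1 : (polar q x u - polar q x u / q u * (2 • q u)) / q u = -(polar q x u / q u) := by
    rw [nsmul_eq_mul]
    field_simp
    ring
  rw [h1, neg_smul, sub_neg_eq_add, sub_add_cancel]

/-- The reflection in a vector `u` with `q u ≠ 0`, as a linear equivalence. -/
noncomputable def reflEquiv (u : W) (hu : q u ≠ 0) : W ≃ₗ[K] W :=
  LinearEquiv.ofLinear (reflLM q u) (reflLM q u)
    (by ext x; exact reflLM_involutive q u hu x)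
    (by ext x; exact reflLM_involutive q u hu x)

lemma reflEquiv_apply (u : W) (hu : q u ≠ 0) (x : W) :
    reflEquiv q u hu x = x - (polar q x u / q u) • u := rfl

/-- Key step: if `v, w` are isotropic and `polar q v w ≠ 0`, the reflection in `v - w`
sends `v` to `w`. -/
lemma exists_isometry_of_polar_ne_zero (v w : W) (hv : q v = 0) (hw : q w = 0)
    (hp : polar q v w ≠ 0) :
    ∃ f : W ≃ₗ[K] W, (∀ x, q (f x) = q x) ∧ f v = w := by
  have hu : q (v - w) ≠ 0 := by
    have : q (v - w) = q v + q w - polar q v w := by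
      rw [sub_eq_add_neg, qmap_add, QuadraticMap.map_neg, polar_neg_right]
      ring
    rw [this, hv, hw]
    simpa using hp
  refine ⟨reflEquiv q (v - w) hu, fun x => reflLM_isometry q (v - w) hu x, ?_⟩
  rw [reflEquiv_apply]
  have h1 : polar q v (v - w) = -polar q v w := by
    rw [polar_sub_right, polar_self, hv]
    simp
  have h2 : q (v - w) = -polar q v w := by
    rw [sub_eq_add_neg, qmap_add, QuadraticMap.map_neg, polar_neg_right, hv, hw]
    ring
  rw [h1, h2, div_self (by simpa using hp), one_smul]
  abel

/-- Witt's theorem for isotropic vectors: in a nondegenerate quadratic space, any two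
nonzero isotropic vectors are related by an isometry. -/
lemma exists_isometry_isotropic (hnd : q.polarBilin.Nondegenerate)
    (v w : W) (hv0 : v ≠ 0) (hw0 : w ≠ 0) (hv : q v = 0) (hw : q w = 0) :
    ∃ f : W ≃ₗ[K] W, (∀ x, q (f x) = q x) ∧ f v = w := by
  by_cases hp : polar q v w ≠ 0
  · exact exists_isometry_of_polar_ne_zero q v w hv hw hp
  push_neg at hp
  -- find u with polar q v u ≠ 0 and polar q w u ≠ 0
  obtain ⟨u₁, hu₁⟩ : ∃ u, polar q v u ≠ 0 := by
    by_contra h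
    push_neg at h
    exact hv0 (hnd.1 v (fun y => h y))
  obtain ⟨u₂, hu₂⟩ : ∃ u, polar q w u ≠ 0 := by
    by_contra h
    push_neg at h
    exact hw0 (hnd.1 w (fun y => h y))
  obtain ⟨u, huv, huw⟩ : ∃ u, polar q v u ≠ 0 ∧ polar q w u ≠ 0 := by
    by_cases h1 : polar q w u₁ ≠ 0
    · exact ⟨u₁, hu₁, h1⟩
    by_cases h2 : polar q v u₂ ≠ 0
    · exact ⟨u₂, h2, hu₂⟩
    push_neg at h1 h2
    exact ⟨u₁ + u₂, by rw [polar_add_right]; simpa [h2] using hu₁,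
      by rw [polar_add_right]; simpa [h1] using hu₂⟩
  -- make u isotropic within span {v, u}
  set t : K := q u / polar q v u with ht
  set z : W := u - t • v with hz
  have hqz : q z = 0 := by
    rw [hz, sub_eq_add_neg, qmap_add, QuadraticMap.map_neg, QuadraticMap.map_smul,
      polar_neg_right, polar_smul_right, hv, ht, polar_comm (⇑q) u v]
    simp only [smul_eq_mul]
    field_simp
    ring
  have hpvz : polar q v z ≠ 0 := by
    rw [hz, polar_sub_right, polar_smul_right, polar_self, hv]
    simpa using huv
  have hpwz : polar q w z ≠ 0 := by
    rw [hz, polar_sub_right, polar_smul_right, polar_comm (⇑q) w v, hp]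
    simpa using huw
  obtain ⟨f₁, hf₁, hf₁v⟩ := exists_isometry_of_polar_ne_zero q v z hv hqz hpvz
  obtain ⟨f₂, hf₂, hf₂z⟩ := exists_isometry_of_polar_ne_zero q z w hqz hw (by rwa [polar_comm (⇑q) z w])
  exact ⟨f₁.trans f₂, fun x => by rw [LinearEquiv.trans_apply, hf₂, hf₁],
    by rw [LinearEquiv.trans_apply, hf₁v, hf₂z]⟩

end Refl

/-- Let `(W₁, q₁)` and `(W₂, q₂)` be finite-dimensional nondegenerate isometric quadratic
spaces over a field `K` of characteristic not two, and let `w₁ ∈ W₁`, `w₂ ∈ W₂` be nonzero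
isotropic vectors. Then there is an isometry `f : W₁ → W₂` with `f w₁ = w₂`. -/
theorem stmt18 {K W₁ W₂ : Type*} [Field K]
    [AddCommGroup W₁] [Module K W₁] [AddCommGroup W₂] [Module K W₂]
    [FiniteDimensional K W₁] [FiniteDimensional K W₂]
    (h2 : (2 : K) ≠ 0)
    (q₁ : QuadraticForm K W₁) (q₂ : QuadraticForm K W₂)
    (hnd₁ : q₁.polarBilin.Nondegenerate) (hnd₂ : q₂.polarBilin.Nondegenerate)
    (hiso : ∃ f : W₁ ≃ₗ[K] W₂, ∀ x : W₁, q₂ (f x) = q₁ x)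
    (w₁ : W₁) (hw₁ : w₁ ≠ 0) (hq₁ : q₁ w₁ = 0)
    (w₂ : W₂) (hw₂ : w₂ ≠ 0) (hq₂ : q₂ w₂ = 0) :
    ∃ f : W₁ ≃ₗ[K] W₂, (∀ x : W₁, q₂ (f x) = q₁ x) ∧ f w₁ = w₂ := by
  obtain ⟨g, hg⟩ := hiso
  have hgw₁ : g w₁ ≠ 0 := fun h => hw₁ (by simpa using congrArg g.symm h)
  have hqgw₁ : q₂ (g w₁) = 0 := by rw [hg, hq₁]
  obtain ⟨h, hiso, hval⟩ := exists_isometry_isotropic q₂ hnd₂ (g w₁) w₂ hgw₁ hw₂ hqgw₁ hq₂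
  exact ⟨g.trans h, fun x => by rw [LinearEquiv.trans_apply, hiso, hg],
    by rw [LinearEquiv.trans_apply, hval]⟩
end
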